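/- arXiv:2601.18243 — 2 statements merged into one kernel-verified Lean document; each statement's English description precedes it below -/
import Mathlib

section
/- Let k be a field and for t = 1,…,n let Rₜ be an invertible square matrix over k with rows and columns indexed by pairs from {1,…,mₜ} such that Rₜ^{t₂} is invertible and Rₜ satisfies the FRT-condition (Rₜ⁻¹)^{t₁} · Pₜ · (Rₜ^{t₂})⁻¹ · Pₜ · K₀ = cₜ · K₀ for some constant cₜ ∈ k, where Pₜ and K₀ are the flip matrix and the matrix (K₀)^{ij}_{kl} = δ_{ij} δ_{kl} on the index set {1,…,mₜ}. Then the tensor R-matrix R_⊗ of R₁,…,Rₙ is invertible with (R_⊗)⁻¹ equal to the tensor R-matrix of R₁⁻¹,…,Rₙ⁻¹, the matrix (R_⊗)^{t₂} is invertible, and R_⊗ satisfies the FRT-condition ((R_⊗)⁻¹)^{t₁} · P · ((R_⊗)^{t₂})⁻¹ · P · K₀ = (c₁ c₂ ⋯ cₙ) · K₀, where P and K₀ are now taken on the index set {1,…,m₁} × ⋯ × {1,…,mₙ}. -/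
/-!
STATEMENT 7: if each `Rₜ` is invertible with `Rₜ^{t₂}` invertible and satisfies the
FRT-condition `(Rₜ⁻¹)^{t₁} Pₜ (Rₜ^{t₂})⁻¹ Pₜ K₀ = cₜ K₀`, then the tensor R-matrix
`R_⊗` is invertible with inverse the tensor R-matrix of the `Rₜ⁻¹`, `(R_⊗)^{t₂}` is
invertible, and `R_⊗` satisfies the FRT-condition with constant `c₁⋯cₙ`.
-/

open Matrix

/-- The flip matrix `P` on an index set `S`: `P^{ij}_{kl} = δ_{il} δ_{jk}`. -/
def flipMatrix (k S : Type*) [Semiring k] [DecidableEq S] :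
    Matrix (S × S) (S × S) k :=
  fun p q => if p.1 = q.2 ∧ p.2 = q.1 then 1 else 0

/-- The matrix `K₀` on an index set `S`: `(K₀)^{ij}_{kl} = δ_{ij} δ_{kl}`. -/
def KZero (k S : Type*) [Semiring k] [DecidableEq S] :
    Matrix (S × S) (S × S) k :=
  fun p q => if p.1 = p.2 ∧ q.1 = q.2 then 1 else 0

/-- The first partial transpose: `(R^{t₁})^{ij}_{kl} = R^{kj}_{il}`. -/
def pt1 {k S : Type*} (M : Matrix (S × S) (S × S) k) : Matrix (S × S) (S × S) k :=
  fun p q => M (q.1, p.2) (p.1, q.2)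

/-- The second partial transpose: `(R^{t₂})^{ij}_{kl} = R^{il}_{kj}`. -/
def pt2 {k S : Type*} (M : Matrix (S × S) (S × S) k) : Matrix (S × S) (S × S) k :=
  fun p q => M (p.1, q.2) (q.1, p.2)

/-- The tensor R-matrix of a family `R₁,…,Rₙ`. -/
def tensorRFamily {k : Type*} [CommRing k] {n : ℕ} {m : Fin n → ℕ}
    (R : ∀ t, Matrix (Fin (m t) × Fin (m t)) (Fin (m t) × Fin (m t)) k) :
    Matrix (((t : Fin n) → Fin (m t)) × ((t : Fin n) → Fin (m t)))
           (((t : Fin n) → Fin (m t)) × ((t : Fin n) → Fin (m t))) k :=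
  fun p q => ∏ t, R t (p.1 t, p.2 t) (q.1 t, q.2 t)

def pairEquiv {n : ℕ} {m : Fin n → ℕ} :
    (((t : Fin n) → Fin (m t)) × ((t : Fin n) → Fin (m t))) ≃ ((t : Fin n) → Fin (m t) × Fin (m t)) where
  toFun p := fun t => (p.1 t, p.2 t)
  invFun g := (fun t => (g t).1, fun t => (g t).2)
  left_inv _ := rfl
  right_inv _ := rfl

lemma tensorRFamily_mul {k : Type*} [CommRing k] {n : ℕ} {m : Fin n → ℕ}
    (A B : ∀ t, Matrix (Fin (m t) × Fin (m t)) (Fin (m t) × Fin (m t)) k) :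
    tensorRFamily A * tensorRFamily B = tensorRFamily (fun t => A t * B t) := by
  ext p q
  simp only [Matrix.mul_apply, tensorRFamily]
  rw [Fintype.prod_sum (fun t j => A t (p.1 t, p.2 t) j * B t j (q.1 t, q.2 t))]
  rw [← Equiv.sum_comp (pairEquiv (n := n) (m := m)).symm]
  refine Finset.sum_congr rfl fun g _ => ?_
  rw [← Finset.prod_mul_distrib]
  rfl

lemma tensorRFamily_one {k : Type*} [CommRing k] {n : ℕ} {m : Fin n → ℕ} :
    tensorRFamily (k := k) (fun t : Fin n => (1 : Matrix (Fin (m t) × Fin (m t)) (Fin (m t) × Fin (m t)) k)) = 1 := by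
  ext p q
  simp only [tensorRFamily, Matrix.one_apply, Prod.mk.injEq]
  by_cases h : p = q
  · subst h; simp
  · rw [if_neg h]
    have : ∃ t, ¬(p.1 t = q.1 t ∧ p.2 t = q.2 t) := by
      by_contra hc
      push_neg at hc
      exact h (Prod.ext (funext fun t => (hc t).1) (funext fun t => (hc t).2))
    obtain ⟨t, ht⟩ := this
    exact Finset.prod_eq_zero (Finset.mem_univ t) (if_neg ht)

lemma tensorRFamily_flip {k : Type*} [CommRing k] {n : ℕ} {m : Fin n → ℕ} :
    tensorRFamily (fun t : Fin n => flipMatrix k (Fin (m t))) = flipMatrix k ((t : Fin n) → Fin (m t)) := by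
  ext p q
  simp only [tensorRFamily, flipMatrix]
  by_cases h : p.1 = q.2 ∧ p.2 = q.1
  · rw [if_pos h]
    exact Finset.prod_eq_one fun t _ => if_pos ⟨congrFun h.1 t, congrFun h.2 t⟩
  · rw [if_neg h]
    have : ∃ t, ¬(p.1 t = q.2 t ∧ p.2 t = q.1 t) := by
      by_contra hc
      push_neg at hc
      exact h ⟨funext fun t => (hc t).1, funext fun t => (hc t).2⟩
    obtain ⟨t, ht⟩ := this
    exact Finset.prod_eq_zero (Finset.mem_univ t) (if_neg ht)

lemma tensorRFamily_K {k : Type*} [CommRing k] {n : ℕ} {m : Fin n → ℕ} :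
    tensorRFamily (fun t : Fin n => KZero k (Fin (m t))) = KZero k ((t : Fin n) → Fin (m t)) := by
  ext p q
  simp only [tensorRFamily, KZero]
  by_cases h : p.1 = p.2 ∧ q.1 = q.2
  · rw [if_pos h]
    exact Finset.prod_eq_one fun t _ => if_pos ⟨congrFun h.1 t, congrFun h.2 t⟩
  · rw [if_neg h]
    have : ∃ t, ¬(p.1 t = p.2 t ∧ q.1 t = q.2 t) := by
      by_contra hc
      push_neg at hc
      exact h ⟨funext fun t => (hc t).1, funext fun t => (hc t).2⟩
    obtain ⟨t, ht⟩ := this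
    exact Finset.prod_eq_zero (Finset.mem_univ t) (if_neg ht)

lemma tensorRFamily_pt1 {k : Type*} [CommRing k] {n : ℕ} {m : Fin n → ℕ}
    (A : ∀ t, Matrix (Fin (m t) × Fin (m t)) (Fin (m t) × Fin (m t)) k) :
    pt1 (tensorRFamily A) = tensorRFamily (fun t => pt1 (A t)) := rfl

lemma tensorRFamily_pt2 {k : Type*} [CommRing k] {n : ℕ} {m : Fin n → ℕ}
    (A : ∀ t, Matrix (Fin (m t) × Fin (m t)) (Fin (m t) × Fin (m t)) k) :
    pt2 (tensorRFamily A) = tensorRFamily (fun t => pt2 (A t)) := rfl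

lemma tensorRFamily_smul {k : Type*} [CommRing k] {n : ℕ} {m : Fin n → ℕ}
    (c : Fin n → k) (A : ∀ t, Matrix (Fin (m t) × Fin (m t)) (Fin (m t) × Fin (m t)) k) :
    tensorRFamily (fun t => c t • A t) = (∏ t, c t) • tensorRFamily A := by
  ext p q
  simp [tensorRFamily, Finset.prod_mul_distrib]

theorem tensorRFamily_FRT {k : Type*} [Field k] {n : ℕ} {m : Fin n → ℕ}
    (R : ∀ t, Matrix (Fin (m t) × Fin (m t)) (Fin (m t) × Fin (m t)) k)
    (c : Fin n → k)
    (hR : ∀ t, IsUnit (R t).det)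
    (ht2 : ∀ t, IsUnit (pt2 (R t)).det)
    (hFRT : ∀ t, pt1 ((R t)⁻¹) * flipMatrix k (Fin (m t)) * (pt2 (R t))⁻¹ *
      flipMatrix k (Fin (m t)) * KZero k (Fin (m t)) = c t • KZero k (Fin (m t))) :
    IsUnit (tensorRFamily R).det ∧
    (tensorRFamily R)⁻¹ = tensorRFamily (fun t => (R t)⁻¹) ∧
    IsUnit (pt2 (tensorRFamily R)).det ∧
    pt1 ((tensorRFamily R)⁻¹) * flipMatrix k ((t : Fin n) → Fin (m t)) *
        (pt2 (tensorRFamily R))⁻¹ * flipMatrix k ((t : Fin n) → Fin (m t)) *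
        KZero k ((t : Fin n) → Fin (m t))
      = (∏ t, c t) • KZero k ((t : Fin n) → Fin (m t)) := by
  have h1 : tensorRFamily R * tensorRFamily (fun t => (R t)⁻¹) = 1 := by
    rw [tensorRFamily_mul]
    have he : (fun t => R t * (R t)⁻¹)
        = fun t : Fin n => (1 : Matrix (Fin (m t) × Fin (m t)) (Fin (m t) × Fin (m t)) k) :=
      funext fun t => Matrix.mul_nonsing_inv _ (hR t)
    rw [he, tensorRFamily_one]
  have hdet : IsUnit (tensorRFamily R).det := Matrix.isUnit_det_of_right_inverse h1
  have hinveq : (tensorRFamily R)⁻¹ = tensorRFamily (fun t => (R t)⁻¹) :=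
    Matrix.inv_eq_right_inv h1
  have h2 : tensorRFamily (fun t => pt2 (R t)) * tensorRFamily (fun t => (pt2 (R t))⁻¹) = 1 := by
    rw [tensorRFamily_mul]
    have he : (fun t => pt2 (R t) * (pt2 (R t))⁻¹)
        = fun t : Fin n => (1 : Matrix (Fin (m t) × Fin (m t)) (Fin (m t) × Fin (m t)) k) :=
      funext fun t => Matrix.mul_nonsing_inv _ (ht2 t)
    rw [he, tensorRFamily_one]
  have hdet2 : IsUnit (pt2 (tensorRFamily R)).det := by
    rw [tensorRFamily_pt2]; exact Matrix.isUnit_det_of_right_inverse h2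
  have hinv2 : (pt2 (tensorRFamily R))⁻¹ = tensorRFamily (fun t => (pt2 (R t))⁻¹) := by
    rw [tensorRFamily_pt2]; exact Matrix.inv_eq_right_inv h2
  refine ⟨hdet, hinveq, hdet2, ?_⟩
  rw [hinveq, hinv2, ← tensorRFamily_flip, ← tensorRFamily_K, tensorRFamily_pt1,
    tensorRFamily_mul, tensorRFamily_mul, tensorRFamily_mul, tensorRFamily_mul]
  have he : (fun t => pt1 ((R t)⁻¹) * flipMatrix k (Fin (m t)) * (pt2 (R t))⁻¹ *
      flipMatrix k (Fin (m t)) * KZero k (Fin (m t)))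
      = fun t => c t • KZero k (Fin (m t)) := funext hFRT
  rw [he, tensorRFamily_smul, tensorRFamily_K]
end

section
/- Let k be a field and v ∈ k a unit with v⁶ ≠ 1 and v⁸ ≠ 1, and set q = v². Let R₀ be the tensor R-matrix of R_q(3) and R_v(2), with rows and columns indexed by pairs from S = {1,2,3} × {1,2}, and let P be the flip matrix on S. Then (P·R₀ − v³·Id)(P·R₀ + v·Id)(P·R₀ + v⁻¹·Id)(P·R₀ − v⁻³·Id) = 0. -/
/-!
STATEMENT 13: Let `v` be a unit in a field `k` with `v⁶ ≠ 1`, `v⁸ ≠ 1`, and `q = v²`.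
Let `R₀` be the tensor R-matrix of `R_q(3)` and `R_v(2)` (indexed by pairs from
`S = {1,2,3} × {1,2}`) and `P` the flip matrix on `S`. Then
`(P·R₀ − v³·Id)(P·R₀ + v·Id)(P·R₀ + v⁻¹·Id)(P·R₀ − v⁻³·Id) = 0`.
-/

open Matrix

/-- The type-A R-matrix `R_q(n)`. -/
def typeAR {k : Type*} [Field k] (q : k) (n : ℕ) :
    Matrix (Fin n × Fin n) (Fin n × Fin n) k :=
  fun p r =>
    (if p.1 = p.2 then q else 1) * (if p.1 = r.1 ∧ p.2 = r.2 then 1 else 0) +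
    (q - q⁻¹) * (if p.1 = r.2 ∧ p.2 = r.1 ∧ p.1 < p.2 then 1 else 0)

/-- The tensor R-matrix of two R-matrices. -/
def tensorR {k : Type*} [CommRing k] {S₁ S₂ : Type*}
    (R₁ : Matrix (S₁ × S₁) (S₁ × S₁) k) (R₂ : Matrix (S₂ × S₂) (S₂ × S₂) k) :
    Matrix ((S₁ × S₂) × (S₁ × S₂)) ((S₁ × S₂) × (S₁ × S₂)) k :=
  fun p q => R₁ (p.1.1, p.2.1) (q.1.1, q.2.1) * R₂ (p.1.2, p.2.2) (q.1.2, q.2.2)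

lemma flip_mul_apply {k S : Type*} [Field k] [DecidableEq S] [Fintype S]
    (X : Matrix (S × S) (S × S) k) (p r : S × S) :
    (flipMatrix k S * X) p r = X (p.2, p.1) r := by
  rw [Matrix.mul_apply]
  rw [Finset.sum_eq_single (p.2, p.1)]
  · simp [flipMatrix]
  · intro b _ hb
    have : ¬ (p.1 = b.2 ∧ p.2 = b.1) := by
      intro ⟨h1, h2⟩; apply hb; ext <;> simp [← h1, ← h2]
    simp [flipMatrix, this]
  · simp

lemma flip_tensor {k : Type*} [Field k] {S₁ S₂ : Type*} [DecidableEq S₁] [DecidableEq S₂]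
    [Fintype S₁] [Fintype S₂]
    (R₁ : Matrix (S₁ × S₁) (S₁ × S₁) k) (R₂ : Matrix (S₂ × S₂) (S₂ × S₂) k) :
    flipMatrix k (S₁ × S₂) * tensorR R₁ R₂ =
      tensorR (flipMatrix k S₁ * R₁) (flipMatrix k S₂ * R₂) := by
  ext p r
  rw [flip_mul_apply]
  simp only [tensorR, flip_mul_apply]

lemma tensor_mul {k : Type*} [CommRing k] {S₁ S₂ : Type*} [Fintype S₁] [Fintype S₂]
    (A C : Matrix (S₁ × S₁) (S₁ × S₁) k) (B D : Matrix (S₂ × S₂) (S₂ × S₂) k) :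
    tensorR A B * tensorR C D = tensorR (A * C) (B * D) := by
  ext p r
  simp only [Matrix.mul_apply, tensorR, Finset.sum_mul_sum]
  rw [← Fintype.sum_prod_type']
  apply Fintype.sum_equiv (Equiv.prodProdProdComm S₁ S₂ S₁ S₂)
  intro s
  simp [Equiv.prodProdProdComm]
  ring

lemma tensor_one {k : Type*} [CommRing k] {S₁ S₂ : Type*} [DecidableEq S₁] [DecidableEq S₂] :
    tensorR (1 : Matrix (S₁ × S₁) (S₁ × S₁) k) (1 : Matrix (S₂ × S₂) (S₂ × S₂) k) = 1 := by
  ext p r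
  simp only [tensorR, Matrix.one_apply, Prod.ext_iff]
  split_ifs <;> simp_all <;> tauto

lemma tensor_smul_left {k : Type*} [CommRing k] {S₁ S₂ : Type*} (c : k)
    (A : Matrix (S₁ × S₁) (S₁ × S₁) k) (B : Matrix (S₂ × S₂) (S₂ × S₂) k) :
    tensorR (c • A) B = c • tensorR A B := by
  ext p r; simp [tensorR]; ring

lemma tensor_smul_right {k : Type*} [CommRing k] {S₁ S₂ : Type*} (c : k)
    (A : Matrix (S₁ × S₁) (S₁ × S₁) k) (B : Matrix (S₂ × S₂) (S₂ × S₂) k) :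
    tensorR A (c • B) = c • tensorR A B := by
  ext p r; simp [tensorR]; ring

lemma tensor_add_left {k : Type*} [CommRing k] {S₁ S₂ : Type*}
    (A A' : Matrix (S₁ × S₁) (S₁ × S₁) k) (B : Matrix (S₂ × S₂) (S₂ × S₂) k) :
    tensorR (A + A') B = tensorR A B + tensorR A' B := by
  ext p r; simp [tensorR]; ring

lemma tensor_add_right {k : Type*} [CommRing k] {S₁ S₂ : Type*}
    (A : Matrix (S₁ × S₁) (S₁ × S₁) k) (B B' : Matrix (S₂ × S₂) (S₂ × S₂) k) :
    tensorR A (B + B') = tensorR A B + tensorR A B' := by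
  ext p r; simp [tensorR]; ring

set_option maxHeartbeats 800000 in
lemma hecke2 {k : Type*} [Field k] (q : k) (hq : q ≠ 0) :
    (flipMatrix k (Fin 2) * typeAR q 2) * (flipMatrix k (Fin 2) * typeAR q 2)
      = (q - q⁻¹) • (flipMatrix k (Fin 2) * typeAR q 2) + 1 := by
  ext ⟨i, j⟩ ⟨l, m⟩
  rw [Matrix.mul_apply]
  simp only [flip_mul_apply, Matrix.add_apply, Matrix.smul_apply, Matrix.one_apply,
    Fintype.sum_prod_type, Fin.sum_univ_succ, Finset.sum_empty]
  fin_cases i <;> fin_cases j <;> fin_cases l <;> fin_cases m <;>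
    · simp [typeAR, Prod.ext_iff]
      try field_simp
      try ring

set_option maxHeartbeats 1600000 in
lemma hecke3 {k : Type*} [Field k] (q : k) (hq : q ≠ 0) :
    (flipMatrix k (Fin 3) * typeAR q 3) * (flipMatrix k (Fin 3) * typeAR q 3)
      = (q - q⁻¹) • (flipMatrix k (Fin 3) * typeAR q 3) + 1 := by
  ext ⟨i, j⟩ ⟨l, m⟩
  rw [Matrix.mul_apply]
  simp only [flip_mul_apply, Matrix.add_apply, Matrix.smul_apply, Matrix.one_apply,
    Fintype.sum_prod_type, Fin.sum_univ_succ, Finset.sum_empty]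
  fin_cases i <;> fin_cases j <;> fin_cases l <;> fin_cases m <;>
    · simp [typeAR, Prod.ext_iff]
      try field_simp
      try ring

set_option maxHeartbeats 4000000 in
theorem tensorR_F4_min_poly {k : Type*} [Field k] (v : k) (hv : IsUnit v)
    (hv6 : v ^ 6 ≠ 1) (hv8 : v ^ 8 ≠ 1) :
    let q := v ^ 2
    let R₀ := tensorR (typeAR q 3) (typeAR v 2)
    let P := flipMatrix k (Fin 3 × Fin 2)
    (P * R₀ - (v ^ 3) • 1) * (P * R₀ + v • 1) * (P * R₀ + v⁻¹ • 1) *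
      (P * R₀ - (v⁻¹ ^ 3) • 1) = 0 := by
  intro q R₀ P
  have hv0 : v ≠ 0 := hv.ne_zero
  have hq0 : (v ^ 2 : k) ≠ 0 := pow_ne_zero 2 hv0
  set A := flipMatrix k (Fin 3) * typeAR (v ^ 2) 3 with hAdef
  set B := flipMatrix k (Fin 2) * typeAR v 2 with hBdef
  have hPR : P * R₀ = tensorR A B := flip_tensor _ _
  set a : k := v ^ 2 - (v ^ 2)⁻¹ with ha
  set b : k := v - v⁻¹ with hb
  have hA : A * A = a • A + 1 := hecke3 (v ^ 2) hq0
  have hB : B * B = b • B + 1 := hecke2 v hv0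
  set M := tensorR A B with hM
  set E₂ := tensorR A (1 : Matrix (Fin 2 × Fin 2) (Fin 2 × Fin 2) k) with hE2
  set E₃ := tensorR (1 : Matrix (Fin 3 × Fin 3) (Fin 3 × Fin 3) k) B with hE3
  have hMM : M * M = (a * b) • M + a • E₂ + b • E₃ + 1 := by
    rw [hM, tensor_mul, hA, hB, tensor_add_left, tensor_add_right, tensor_add_right,
      tensor_smul_left, tensor_smul_left, tensor_smul_right, tensor_smul_right, tensor_one]
    module
  have hME2 : M * E₂ = a • M + E₃ := by
    rw [hM, hE2, tensor_mul, hA, mul_one, tensor_add_left, tensor_smul_left]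
  have hME3 : M * E₃ = b • M + E₂ := by
    rw [hM, hE3, tensor_mul, mul_one, hB, tensor_add_right, tensor_smul_right]
  have hE2M : E₂ * M = a • M + E₃ := by
    rw [hM, hE2, tensor_mul, hA, one_mul, tensor_add_left, tensor_smul_left]
  have hE3M : E₃ * M = b • M + E₂ := by
    rw [hM, hE3, tensor_mul, one_mul, hB, tensor_add_right, tensor_smul_right]
  have hE22 : E₂ * E₂ = a • E₂ + 1 := by
    rw [hE2, tensor_mul, hA, mul_one, tensor_add_left, tensor_smul_left, tensor_one]
  have hE33 : E₃ * E₃ = b • E₃ + 1 := by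
    rw [hE3, tensor_mul, hB, one_mul, tensor_add_right, tensor_smul_right, tensor_one]
  have hE23 : E₂ * E₃ = M := by
    rw [hM, hE2, hE3, tensor_mul, mul_one, one_mul]
  have hE32 : E₃ * E₂ = M := by
    rw [hM, hE2, hE3, tensor_mul, mul_one, one_mul]
  rw [hPR]
  simp only [mul_add, add_mul, mul_sub, sub_mul, smul_mul_assoc, mul_smul_comm, smul_smul,
    mul_one, one_mul, smul_add, smul_sub, hMM, hME2, hME3, hE2M, hE3M, hE22, hE33, hE23, hE32]
  have hvv : ∀ m n : ℕ, v ^ (m + n) * v⁻¹ ^ n = v ^ m := fun m n => by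
    rw [pow_add, mul_assoc, ← mul_pow, mul_inv_cancel₀ hv0, one_pow, mul_one]
  match_scalars <;> (simp only [ha, hb]; field_simp; ring)
end
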